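/- The sequence n ↦ λ₁(F₁, 0ⁿ) is strictly decreasing and converges to -λ* as n → ∞. -/

import Mathlib

/-- A rooted graph: a finite simple graph with a distinguished root vertex. -/
structure RootedGraph where
  V : Type
  [fintypeV : Fintype V]
  G : SimpleGraph V
  root : V

attribute [instance] RootedGraph.fintypeV

/-- One-step extension of a rooted graph: attach a new path vertex (the new root)
to the old root, together with a clique of `k` new vertices each adjacent to
both the old root and the new path vertex. -/
def RootedGraph.extend (F : RootedGraph) (k : ℕ) : RootedGraph where
  V := F.V ⊕ Option (Fin k)
  G :=
    { Adj := fun a b =>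
        match a, b with
        | Sum.inl u, Sum.inl w => F.G.Adj u w
        | Sum.inl u, Sum.inr _ => u = F.root
        | Sum.inr _, Sum.inl w => w = F.root
        | Sum.inr x, Sum.inr y => x ≠ y
      symm := by
        constructor
        rintro (u | x) (w | y) h
        · exact F.G.adj_symm h
        · exact h
        · exact h
        · exact h.symm
      loopless := by
        constructor
        rintro (u | x) h
        · exact F.G.ne_of_adj h rfl
        · exact h rfl }
  root := Sum.inr none

/-- The rowing graph `(F, a)`. -/
def RootedGraph.rowing (F : RootedGraph) (a : List ℕ) : RootedGraph :=
  a.foldl RootedGraph.extend F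

open scoped Classical in
/-- Adjacency matrix of (the graph of) a rooted graph. -/
noncomputable def RootedGraph.adjMat (F : RootedGraph) : Matrix F.V F.V ℝ :=
  Matrix.of fun u v => if F.G.Adj u v then 1 else 0

/-- The smallest adjacency eigenvalue of a rooted graph. -/
noncomputable def RootedGraph.lam1 (F : RootedGraph) : ℝ :=
  sInf {t : ℝ | ∃ x : F.V → ℝ, x ≠ 0 ∧ F.adjMat.mulVec x = t • x}

/-- `F₁`: the path on 4 vertices `u₁u₂u₃u₄` rooted at `u₃`. -/
def F1 : RootedGraph := { V := Fin 4, G := SimpleGraph.pathGraph 4, root := 2 }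

/-- `F₂`: the fan consisting of a path `p₁p₂p₃p₄` (vertices `0,1,2,3`) together with an
apex `r` (vertex `4`) adjacent to `p₁, p₂, p₃, p₄`, rooted at the apex `r`. -/
def F2 : RootedGraph :=
  { V := Fin 5,
    G := SimpleGraph.fromRel fun i j => (i.val + 1 = j.val ∧ j.val ≤ 3) ∨ i.val = 4,
    root := 4 }

/-- `F₃`: the path on 6 vertices `w₁w₂w₃w₄w₅w₆` rooted at `w₅`. -/
def F3 : RootedGraph := { V := Fin 6, G := SimpleGraph.pathGraph 6, root := 4 }

/-!
`(F₁, 0ⁿ)` is `F₁` with a pendant path of length `n` at its root. Call `z` a geometric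
eigenvector of ratio `q` on a rooted graph if `A z = (q + q⁻¹) z - q z(root) e_root`: continuing
`z` along the path by `z(root) q, z(root) q², …` gives a vector of the same kind on the longer
graph. Let `q = ρ^{-1/2} ∈ (0, 1)`, so that `q⁶ + q⁴ = 1`. Then `F₁` carries such a vector both
for `q` and for `-q`. Continued along the path, the positive one is a Perron supersolution,
which gives `λ₁ ≥ -(q + q⁻¹)`. The alternating one is a Rayleigh test vector with defect
`q^(2n+1)`, which gives `λ₁ ≤ -(q + q⁻¹) + q^(2n+1)`; together the two bounds squeeze `λ₁` to
`-λ*`. For strict decrease, extend a `λ₁`-eigenvector by zero: the new graph has `λ₁` no larger,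
and equality would make the eigenvector vanish at the root. Since the eigenvalue is nonzero,
this vanishing propagates along the path and through `F₁`.
-/

open Matrix Filter Topology

theorem Matrix.mem_spectrum_iff_exists_mulVec_eq_smul {K n : Type*} [Field K] [Fintype n]
    [DecidableEq n] {A : Matrix n n K} {t : K} :
    t ∈ spectrum K A ↔ ∃ x, x ≠ 0 ∧ A *ᵥ x = t • x := by
  rw [← spectrum_toLin', ← Module.End.hasEigenvalue_iff_mem_spectrum]
  constructor
  · intro h
    obtain ⟨x, hx⟩ := h.exists_hasEigenvector
    exact ⟨x, hx.2, by simpa using hx.apply_eq_smul⟩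
  · rintro ⟨x, hx, hAx⟩
    exact Module.End.hasEigenvalue_of_hasEigenvector
      ⟨by simpa [Module.End.mem_eigenspace_iff] using hAx, hx⟩

namespace Matrix.IsHermitian

variable {n : Type*} [Fintype n] [DecidableEq n] {A : Matrix n n ℝ}

theorem sInf_spectrum_mem [Nonempty n] (hA : A.IsHermitian) :
    sInf (spectrum ℝ A) ∈ spectrum ℝ A := by
  have hne : (spectrum ℝ A).Nonempty := by
    rw [hA.spectrum_real_eq_range_eigenvalues]
    exact Set.range_nonempty _
  exact hne.csInf_mem A.finite_real_spectrum

theorem posSemidef_sub_sInf_spectrum_smul_one (hA : A.IsHermitian) :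
    (A - sInf (spectrum ℝ A) • 1).PosSemidef := by
  rw [posSemidef_iff_isHermitian_and_spectrum_nonneg]
  refine ⟨hA.sub (isHermitian_one.smul (IsSelfAdjoint.all _)), ?_⟩
  rw [← Algebra.algebraMap_eq_smul_one, ← spectrum.sub_singleton_eq]
  rintro _ ⟨s, hs, _, rfl, rfl⟩
  exact sub_nonneg.2 (csInf_le A.finite_real_spectrum.bddBelow hs)

end Matrix.IsHermitian

theorem Matrix.IsSymm.abs_le_of_mulVec_le_smul {n : Type*} [Fintype n] {A : Matrix n n ℝ}
    (hA : A.IsSymm) (hA₀ : ∀ i j, 0 ≤ A i j) {y w : n → ℝ} {c t : ℝ} (hy : ∀ i, 0 < y i)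
    (hAy : A *ᵥ y ≤ c • y) (hw : w ≠ 0) (hAw : A *ᵥ w = t • w) : |t| ≤ c := by
  set p : n → ℝ := fun i => |w i|
  have hp : 0 ≤ p := fun i => abs_nonneg (w i)
  have htp : |t| • p ≤ A *ᵥ p := fun i => by
    calc |t| * |w i| = |(A *ᵥ w) i| := by rw [hAw, Pi.smul_apply, smul_eq_mul, abs_mul]
      _ ≤ ∑ j, |A i j * w j| := Finset.abs_sum_le_sum_abs _ _
      _ = (A *ᵥ p) i := by simp only [abs_mul, abs_of_nonneg (hA₀ i _)]; rfl
  have hyp : 0 < y ⬝ᵥ p := by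
    obtain ⟨i, hi⟩ := Function.ne_iff.mp hw
    exact Finset.sum_pos' (fun j _ => mul_nonneg (hy j).le (hp j))
      ⟨i, Finset.mem_univ i, mul_pos (hy i) (abs_pos.mpr hi)⟩
  refine le_of_mul_le_mul_right ?_ hyp
  calc |t| * (y ⬝ᵥ p) = y ⬝ᵥ (|t| • p) := by rw [dotProduct_smul, smul_eq_mul]
    _ ≤ y ⬝ᵥ A *ᵥ p := dotProduct_le_dotProduct_of_nonneg_left htp fun i => (hy i).le
    _ = A *ᵥ y ⬝ᵥ p := by rw [dotProduct_mulVec, ← mulVec_transpose, hA.eq]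
    _ ≤ c • y ⬝ᵥ p := dotProduct_le_dotProduct_of_nonneg_right hAy hp
    _ = c * (y ⬝ᵥ p) := by rw [smul_dotProduct, smul_eq_mul]

theorem four_le_sq_add_inv {q : ℝ} (hq : q ≠ 0) : 4 ≤ (q + q⁻¹) ^ 2 := by
  have : (q + q⁻¹) ^ 2 = (q - q⁻¹) ^ 2 + 4 := by field_simp; ring
  nlinarith [sq_nonneg (q - q⁻¹)]

namespace RootedGraph

open scoped Classical

instance (F : RootedGraph) : Nonempty F.V := ⟨F.root⟩

def attachPath (F : RootedGraph) : ℕ → RootedGraph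
  | 0 => F
  | n + 1 => (F.attachPath n).extend 0

variable (F : RootedGraph)

theorem adjMat_eq_adjMatrix [DecidableRel F.G.Adj] : F.adjMat = F.G.adjMatrix ℝ := by
  ext u v
  simp [adjMat, SimpleGraph.adjMatrix_apply]

theorem adjMat_isSymm : F.adjMat.IsSymm := by
  rw [adjMat_eq_adjMatrix]
  exact F.G.isSymm_adjMatrix

theorem adjMat_nonneg (u v : F.V) : 0 ≤ F.adjMat u v := by
  simp only [adjMat, of_apply]
  split_ifs <;> norm_num

theorem lam1_eq_sInf_spectrum : F.lam1 = sInf (spectrum ℝ F.adjMat) := by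
  unfold lam1
  congr 1
  ext t
  exact Matrix.mem_spectrum_iff_exists_mulVec_eq_smul.symm

theorem exists_mulVec_eq_lam1_smul : ∃ w, w ≠ 0 ∧ F.adjMat *ᵥ w = F.lam1 • w := by
  rw [← Matrix.mem_spectrum_iff_exists_mulVec_eq_smul, lam1_eq_sInf_spectrum]
  exact (isHermitian_iff_isSymm.2 F.adjMat_isSymm).sInf_spectrum_mem

theorem posSemidef_adjMat_sub_lam1_smul_one : (F.adjMat - F.lam1 • 1).PosSemidef := by
  rw [lam1_eq_sInf_spectrum]
  exact (isHermitian_iff_isSymm.2 F.adjMat_isSymm).posSemidef_sub_sInf_spectrum_smul_one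

theorem dotProduct_adjMat_sub_lam1_smul_one_mulVec (x : F.V → ℝ) :
    x ⬝ᵥ (F.adjMat - F.lam1 • 1) *ᵥ x = x ⬝ᵥ F.adjMat *ᵥ x - F.lam1 * (x ⬝ᵥ x) := by
  rw [sub_mulVec, smul_mulVec, one_mulVec, dotProduct_sub, dotProduct_smul, smul_eq_mul]

theorem lam1_mul_dotProduct_self_le (x : F.V → ℝ) :
    F.lam1 * (x ⬝ᵥ x) ≤ x ⬝ᵥ F.adjMat *ᵥ x := by
  have := F.posSemidef_adjMat_sub_lam1_smul_one.dotProduct_mulVec_nonneg x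
  rw [star_trivial, dotProduct_adjMat_sub_lam1_smul_one_mulVec] at this
  linarith

theorem mulVec_eq_lam1_smul_of_dotProduct_eq {x : F.V → ℝ}
    (hx : x ⬝ᵥ F.adjMat *ᵥ x = F.lam1 * (x ⬝ᵥ x)) : F.adjMat *ᵥ x = F.lam1 • x := by
  have := (F.posSemidef_adjMat_sub_lam1_smul_one.dotProduct_mulVec_zero_iff x).1
    (by rw [star_trivial, dotProduct_adjMat_sub_lam1_smul_one_mulVec, hx, sub_self])
  rwa [sub_mulVec, smul_mulVec, one_mulVec, sub_eq_zero] at this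

theorem rowing_append_singleton (a : List ℕ) (k : ℕ) :
    F.rowing (a ++ [k]) = (F.rowing a).extend k := by
  simp [rowing, List.foldl_append]

theorem rowing_replicate_zero (n : ℕ) : F.rowing (List.replicate n 0) = F.attachPath n := by
  induction n with
  | zero => rfl
  | succ n ih => rw [List.replicate_succ', rowing_append_singleton, ih, attachPath]

section extend

variable (k : ℕ) (u w : F.V) (o : Option (Fin k))

@[simp] theorem adjMat_extend_inl_inl : (F.extend k).adjMat (.inl u) (.inl w) = F.adjMat u w :=
  rfl

@[simp] theorem adjMat_extend_inl_inr :
    (F.extend k).adjMat (.inl u) (.inr o) = if u = F.root then 1 else 0 := rfl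

@[simp] theorem adjMat_extend_inr_inl :
    (F.extend k).adjMat (.inr o) (.inl w) = if w = F.root then 1 else 0 := rfl

end extend

@[simp] theorem adjMat_extend_zero_inr_inr (o o' : Option (Fin 0)) :
    (F.extend 0).adjMat (.inr o) (.inr o') = 0 := by
  rw [Subsingleton.elim o o']
  exact if_neg fun h => h rfl

/- Vertices of `F.extend 0` are written `.inl u` and `.inr o`, whose type is only definitionally
`(F.extend 0).V`; the lemmas below are stated so that `simp` can still evaluate vectors there. -/

variable (x : (F.extend 0).V → ℝ)

@[simp] theorem adjMat_extend_zero_mulVec_inl (u : F.V) :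
    ((F.extend 0).adjMat *ᵥ x) (.inl u) =
      (F.adjMat *ᵥ fun w => x (.inl w)) u + if u = F.root then x (F.extend 0).root else 0 := by
  change ∑ w : F.V ⊕ Option (Fin 0), _ = _
  simp only [Fintype.sum_sum_type, adjMat_extend_inl_inl, Finset.univ_unique, adjMat_extend_inl_inr,
    ite_mul, one_mul, zero_mul, Finset.sum_ite_irrel, Finset.sum_singleton, Finset.sum_const_zero,
    mulVec, dotProduct, add_right_inj]
  rfl

@[simp] theorem adjMat_extend_zero_mulVec_inr (o : Option (Fin 0)) :
    ((F.extend 0).adjMat *ᵥ x) (.inr o) = x (.inl F.root) := by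
  change ∑ w : F.V ⊕ Option (Fin 0), _ = _
  simp [Fintype.sum_sum_type]

@[simp] theorem adjMat_extend_zero_mulVec_root :
    ((F.extend 0).adjMat *ᵥ x) (F.extend 0).root = x (.inl F.root) :=
  adjMat_extend_zero_mulVec_inr F x none

def extendVec (z : F.V → ℝ) (c : ℝ) : (F.extend 0).V → ℝ := Sum.elim z fun _ => c

variable (z z' : F.V → ℝ) (c c' : ℝ)

@[simp] theorem extendVec_inl (u : F.V) : F.extendVec z c (.inl u) = z u := rfl

@[simp] theorem extendVec_inr (o : Option (Fin 0)) : F.extendVec z c (.inr o) = c := rfl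

@[simp] theorem extendVec_root : F.extendVec z c (F.extend 0).root = c := rfl

@[simp] theorem single_extend_zero_root_inl (u : F.V) :
    (Pi.single (F.extend 0).root c : (F.extend 0).V → ℝ) (.inl u) = 0 :=
  Pi.single_eq_of_ne (ι := (F.extend 0).V) (M := fun _ => ℝ) Sum.inl_ne_inr c

@[simp] theorem single_extend_zero_root_inr (o : Option (Fin 0)) :
    (Pi.single (F.extend 0).root c : (F.extend 0).V → ℝ) (.inr o) = c := by
  rw [Subsingleton.elim o none]
  exact Pi.single_eq_same (ι := (F.extend 0).V) (M := fun _ => ℝ) _ c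

theorem extendVec_dotProduct : F.extendVec z c ⬝ᵥ F.extendVec z' c' = z ⬝ᵥ z' + c * c' := by
  change Sum.elim z (fun _ : Option (Fin 0) => c) ⬝ᵥ Sum.elim z' (fun _ => c') = _
  simp [dotProduct]

/-- Continued along an infinite ray at the root by `z root * q ^ k`, such a `z` becomes an
eigenvector for `q + q⁻¹`; the defect at the root is the missing first value `q * z root`. -/
def IsGeomEigenvector (q : ℝ) (z : F.V → ℝ) : Prop :=
  F.adjMat *ᵥ z = (q + q⁻¹) • z - Pi.single F.root (q * z F.root)

def geomExtend (z : F.V → ℝ) (q : ℝ) : (n : ℕ) → (F.attachPath n).V → ℝ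
  | 0 => z
  | n + 1 =>
    (F.attachPath n).extendVec (geomExtend z q n) (q * geomExtend z q n (F.attachPath n).root)

def EigenvectorsNonzeroAtRoot (t : ℝ) : Prop :=
  ∀ w, F.adjMat *ᵥ w = t • w → w F.root = 0 → w = 0

variable {F} {z : F.V → ℝ} {q t : ℝ}

theorem isGeomEigenvector_iff : F.IsGeomEigenvector q z ↔
    ∀ v, (F.adjMat *ᵥ z) v = (q + q⁻¹) * z v - if v = F.root then q * z F.root else 0 := by
  simp [IsGeomEigenvector, funext_iff, Pi.single_apply]

theorem IsGeomEigenvector.extend_zero (hq : q ≠ 0) (hz : F.IsGeomEigenvector q z) :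
    (F.extend 0).IsGeomEigenvector q (F.extendVec z (q * z F.root)) := by
  unfold IsGeomEigenvector at *
  funext v
  simp only [Pi.sub_apply, Pi.smul_apply, smul_eq_mul]
  rcases v with u | o
  · simp [hz, Pi.single_apply]
  · simp only [adjMat_extend_zero_mulVec_inr, extendVec_inl, extendVec_inr, extendVec_root,
      single_extend_zero_root_inr]
    field_simp
    ring

theorem IsGeomEigenvector.geomExtend (hq : q ≠ 0) (hz : F.IsGeomEigenvector q z) (n : ℕ) :
    (F.attachPath n).IsGeomEigenvector q (F.geomExtend z q n) := by
  induction n with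
  | zero => exact hz
  | succ n ih => exact ih.extend_zero hq

theorem geomExtend_root (n : ℕ) :
    F.geomExtend z q n (F.attachPath n).root = q ^ n * z F.root := by
  induction n with
  | zero => simp [geomExtend, attachPath]
  | succ n ih =>
    change q * F.geomExtend z q n (F.attachPath n).root = _
    rw [ih, pow_succ']
    ring

theorem dotProduct_self_le_geomExtend (n : ℕ) :
    z ⬝ᵥ z ≤ F.geomExtend z q n ⬝ᵥ F.geomExtend z q n := by
  induction n with
  | zero => rfl
  | succ n ih =>
    refine ih.trans ?_
    erw [extendVec_dotProduct]
    exact le_add_of_nonneg_right (mul_self_nonneg _)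

theorem geomExtend_pos (hq : 0 < q) (hz : ∀ v, 0 < z v) (n : ℕ) (v : (F.attachPath n).V) :
    0 < F.geomExtend z q n v := by
  induction n with
  | zero => exact hz v
  | succ n ih =>
    rcases v with u | o
    · exact ih u
    · exact mul_pos hq (ih _)

theorem neg_le_lam1_attachPath (hq : 0 < q) (hz : F.IsGeomEigenvector q z) (hz₀ : ∀ v, 0 < z v)
    (n : ℕ) : -(q + q⁻¹) ≤ (F.attachPath n).lam1 := by
  obtain ⟨w, hw, hAw⟩ := (F.attachPath n).exists_mulVec_eq_lam1_smul
  have hy := geomExtend_pos hq hz₀ n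
  have hAy : (F.attachPath n).adjMat *ᵥ F.geomExtend z q n ≤ (q + q⁻¹) • F.geomExtend z q n := by
    rw [hz.geomExtend hq.ne' n]
    exact sub_le_self _ (Pi.single_nonneg.2 (mul_nonneg hq.le (hy _).le))
  exact neg_le_of_abs_le <| (F.attachPath n).adjMat_isSymm.abs_le_of_mulVec_le_smul
    (adjMat_nonneg _) hy hAy hw hAw

theorem lam1_attachPath_le (hq : q < 0) (hz : F.IsGeomEigenvector q z) (hr : z F.root ≠ 0)
    (n : ℕ) : (F.attachPath n).lam1 ≤ q + q⁻¹ - q ^ (2 * n + 1) := by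
  have hAx := hz.geomExtend hq.ne n
  have hroot := geomExtend_root (F := F) (z := z) (q := q) n
  have hzx := dotProduct_self_le_geomExtend (F := F) (z := z) (q := q) n
  generalize F.geomExtend z q n = x at hAx hroot hzx
  have hxAx : x ⬝ᵥ (F.attachPath n).adjMat *ᵥ x =
      (q + q⁻¹) * (x ⬝ᵥ x) - q ^ (2 * n + 1) * z F.root ^ 2 := by
    rw [hAx, dotProduct_sub, dotProduct_smul, dotProduct_single, smul_eq_mul, hroot]
    ring
  have hrx : z F.root ^ 2 ≤ x ⬝ᵥ x := by
    refine le_trans ?_ hzx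
    rw [sq]
    exact Finset.single_le_sum (fun i _ => mul_self_nonneg (z i)) (Finset.mem_univ F.root)
  have hxx : 0 < x ⬝ᵥ x := (sq_pos_of_ne_zero hr).trans_le hrx
  have hodd : q ^ (2 * n + 1) < 0 := Odd.pow_neg ⟨n, rfl⟩ hq
  have hray := (F.attachPath n).lam1_mul_dotProduct_self_le x
  refine le_of_mul_le_mul_right ?_ hxx
  nlinarith [mul_le_mul_of_nonneg_left hrx (neg_nonneg.2 hodd.le)]

theorem EigenvectorsNonzeroAtRoot.extend_zero (h : F.EigenvectorsNonzeroAtRoot t) :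
    (F.extend 0).EigenvectorsNonzeroAtRoot t := by
  intro w hw hroot
  have hw' : ∀ v, ((F.extend 0).adjMat *ᵥ w) v = t * w v := fun v => by rw [hw]; rfl
  have hold : w (.inl F.root) = 0 := by simpa [hroot] using hw' (F.extend 0).root
  have hres : F.adjMat *ᵥ (fun u => w (.inl u)) = t • fun u => w (.inl u) := by
    funext u
    simpa [hroot] using hw' (.inl u)
  funext v
  rcases v with u | o
  · exact congrFun (h _ hres hold) u
  · rw [Subsingleton.elim o none]
    exact hroot

theorem EigenvectorsNonzeroAtRoot.attachPath (h : F.EigenvectorsNonzeroAtRoot t) (n : ℕ) :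
    (F.attachPath n).EigenvectorsNonzeroAtRoot t := by
  induction n with
  | zero => exact h
  | succ n ih => exact ih.extend_zero

theorem lam1_extend_zero_lt (h : F.EigenvectorsNonzeroAtRoot F.lam1) :
    (F.extend 0).lam1 < F.lam1 := by
  obtain ⟨w, hw, hAw⟩ := F.exists_mulVec_eq_lam1_smul
  have hA' : (F.extend 0).adjMat *ᵥ F.extendVec w 0 = F.extendVec (F.lam1 • w) (w F.root) := by
    funext v
    rcases v with u | o
    · simp [hAw]
    · simp
  have hww : F.extendVec w 0 ⬝ᵥ F.extendVec w 0 = w ⬝ᵥ w := by simp [extendVec_dotProduct]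
  have hquad :
      F.extendVec w 0 ⬝ᵥ (F.extend 0).adjMat *ᵥ F.extendVec w 0 = F.lam1 * (w ⬝ᵥ w) := by
    simp [hA', extendVec_dotProduct, dotProduct_smul]
  have hpos : 0 < w ⬝ᵥ w :=
    (Fintype.sum_nonneg fun i => mul_self_nonneg (w i)).lt_of_ne'
      (dotProduct_self_eq_zero.not.2 hw)
  have hle : (F.extend 0).lam1 ≤ F.lam1 := by
    have := (F.extend 0).lam1_mul_dotProduct_self_le (F.extendVec w 0)
    rw [hww, hquad] at this
    exact le_of_mul_le_mul_right this hpos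
  refine hle.lt_of_ne fun heq => hw (h w hAw ?_)
  have := (F.extend 0).mulVec_eq_lam1_smul_of_dotProduct_eq (x := F.extendVec w 0)
    (by rw [hquad, hww, heq])
  simpa using congrFun this (F.extend 0).root

end RootedGraph

namespace F1

theorem adjMat_apply (i j : Fin 4) :
    F1.adjMat i j = if (i : ℕ) + 1 = j ∨ (j : ℕ) + 1 = i then 1 else 0 := by
  classical
  exact if_congr SimpleGraph.pathGraph_adj rfl rfl

theorem adjMat_mulVec (x : Fin 4 → ℝ) : F1.adjMat *ᵥ x = ![x 1, x 0 + x 2, x 1 + x 3, x 2] := by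
  ext i
  change ∑ j : Fin 4, F1.adjMat i j * x j = _
  fin_cases i <;> simp [Fin.sum_univ_four, adjMat_apply]

/-- The eigenvalue equations for `q + q⁻¹` at the non-root vertices `u₁, u₂, u₄` determine this
vector up to scaling; at the root `u₃` the equation of `IsGeomEigenvector` becomes
`q⁶ + q⁴ = 1`. -/
noncomputable def geomVec (q : ℝ) : Fin 4 → ℝ :=
  let l := q + q⁻¹
  ![l, l ^ 2, l * (l ^ 2 - 1), l ^ 2 - 1]

theorem isGeomEigenvector_geomVec {q : ℝ} (hq : q ^ 6 + q ^ 4 = 1) :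
    F1.IsGeomEigenvector q (geomVec q) := by
  have hq0 : q ≠ 0 := by rintro rfl; norm_num at hq
  refine RootedGraph.isGeomEigenvector_iff.2 fun v => ?_
  erw [adjMat_mulVec]
  fin_cases v <;> simp only [geomVec, F1, Fin.isValue, cons_val, cons_val_zero, cons_val_one,
    Fin.zero_eta, Fin.mk_one, Fin.reduceFinMk, Fin.reduceEq, ↓reduceIte, sub_zero]
  · ring
  · ring
  · field_simp
    linear_combination hq

theorem geomVec_pos {q : ℝ} (hq : 0 < q) (i : Fin 4) : 0 < geomVec q i := by
  have h4 := four_le_sq_add_inv hq.ne'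
  have hl : 0 < q + q⁻¹ := by positivity
  fin_cases i <;> simp only [geomVec, Fin.isValue, cons_val, cons_val_zero, cons_val_one,
    Fin.zero_eta, Fin.mk_one, Fin.reduceFinMk] <;> nlinarith

theorem geomVec_root_ne_zero {q : ℝ} (hq : q ≠ 0) : geomVec q F1.root ≠ 0 := by
  have h4 := four_le_sq_add_inv hq
  have hl : q + q⁻¹ ≠ 0 := by rintro h; rw [h] at h4; norm_num at h4
  simp only [geomVec, F1, Fin.isValue, cons_val, ne_eq, mul_eq_zero, hl, false_or]
  nlinarith

theorem eigenvectorsNonzeroAtRoot {t : ℝ} (ht : t ≠ 0) : F1.EigenvectorsNonzeroAtRoot t := by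
  rintro (w : Fin 4 → ℝ) hw (h2 : w 2 = 0)
  rw [adjMat_mulVec] at hw
  have h : ∀ i, ![w 1, w 0 + w 2, w 1 + w 3, w 2] i = t * w i := fun i => congrFun hw i
  have h3 : w 3 = 0 := by simpa [h2, ht] using (h 3).symm
  have h1 : w 1 = 0 := by simpa [h2, h3] using h 2
  have h0 : w 0 = 0 := by simpa [h1, ht] using (h 0).symm
  funext i
  fin_cases i <;> assumption

theorem lam1_attachPath_bounds {q : ℝ} (hq : 0 < q) (hq6 : q ^ 6 + q ^ 4 = 1) (n : ℕ) :
    -(q + q⁻¹) ≤ (F1.attachPath n).lam1 ∧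
      (F1.attachPath n).lam1 ≤ -(q + q⁻¹) + q ^ (2 * n + 1) := by
  refine ⟨RootedGraph.neg_le_lam1_attachPath hq (isGeomEigenvector_geomVec hq6)
    (geomVec_pos hq) n, ?_⟩
  have hq6' : (-q) ^ 6 + (-q) ^ 4 = 1 := by
    rw [Even.neg_pow ⟨3, rfl⟩, Even.neg_pow ⟨2, rfl⟩, hq6]
  have := RootedGraph.lam1_attachPath_le (neg_neg_of_pos hq) (isGeomEigenvector_geomVec hq6')
    (geomVec_root_ne_zero (neg_ne_zero.2 hq.ne')) n
  rw [Odd.neg_pow ⟨n, rfl⟩, inv_neg] at this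
  linarith

end F1

theorem exists_pow_six_add_pow_four_eq_one {ρ : ℝ} (hρ : ρ ^ 3 = ρ + 1) :
    ∃ q : ℝ, 0 < q ∧ q < 1 ∧ q ^ 6 + q ^ 4 = 1 ∧ √ρ + (√ρ)⁻¹ = q + q⁻¹ := by
  have hρ1 : 1 < ρ := by nlinarith [sq_nonneg ρ, sq_nonneg (ρ - 1), sq_nonneg (ρ + 1)]
  have hsq : (√ρ) ^ 2 = ρ := Real.sq_sqrt (by linarith)
  have hs1 : 1 < √ρ := by rw [Real.lt_sqrt zero_le_one]; linarith
  refine ⟨(√ρ)⁻¹, by positivity, inv_lt_one_of_one_lt₀ hs1, ?_, by rw [inv_inv, add_comm]⟩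
  rw [show (6 : ℕ) = 2 * 3 by rfl, show (4 : ℕ) = 2 * 2 by rfl, pow_mul, pow_mul, inv_pow, hsq]
  field_simp
  linear_combination -hρ

/-- The sequence `n ↦ λ₁(F₁, 0ⁿ)` is strictly decreasing and converges to `-λ*`, where
`λ* = √ρ + 1/√ρ` and `ρ` is the unique real root of `x³ = x + 1`. -/
theorem lam1_rowing_F1_strictAnti_tendsto (ρ : ℝ) (hρ : ρ ^ 3 = ρ + 1) :
    StrictAnti (fun n : ℕ => (F1.rowing (List.replicate n 0)).lam1) ∧
    Filter.Tendsto (fun n : ℕ => (F1.rowing (List.replicate n 0)).lam1)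
      Filter.atTop (nhds (-(Real.sqrt ρ + (Real.sqrt ρ)⁻¹))) := by
  obtain ⟨q, hq, hq1, hq6, hlim⟩ := exists_pow_six_add_pow_four_eq_one hρ
  have hbounds := F1.lam1_attachPath_bounds hq hq6
  simp_rw [F1.rowing_replicate_zero, hlim]
  constructor
  · refine strictAnti_nat_of_succ_lt fun n => RootedGraph.lam1_extend_zero_lt <|
      (F1.eigenvectorsNonzeroAtRoot (ne_of_lt ?_)).attachPath n
    have : q ^ (2 * n + 1) ≤ q := pow_le_of_le_one hq.le hq1.le (by omega)
    linarith [(hbounds n).2, inv_pos.2 hq]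
  · have hpow : Tendsto (fun n : ℕ => q ^ (2 * n + 1)) atTop (𝓝 0) :=
      (tendsto_pow_atTop_nhds_zero_of_lt_one hq.le hq1).comp
        (StrictMono.tendsto_atTop fun a b h => by omega)
    exact tendsto_of_tendsto_of_tendsto_of_le_of_le tendsto_const_nhds
      (by simpa using hpow.const_add (-(q + q⁻¹))) (fun n => (hbounds n).1) fun n => (hbounds n).2
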